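/- Let q be generic and let M ≥ 0, i ≥ 1 and l be integers with 0 ≤ l < i. Then Σ_{r=0}^{l} (−1)^r [M+r]! [M+2r+1] / ([r]! [i−r]! [M+r+i+1]!) = (−1)^l [M+l+1]! / ([M+i+l+1]! [i−l−1]! [l]! [i]). (Here M plays the role of 2m in the paper.) -/

import Mathlib

open Matrix Filter Topology BigOperators Finset

noncomputable section

/-- Spin configurations: basis labels of `(ℂ²)^{⊗n}`; `0` is `+`, `1` is `−`. -/
abbrev Spins (n : ℕ) := Fin n → Fin 2

/-- σ⁺ = [[0,1],[0,0]] -/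
def sigmaP : Matrix (Fin 2) (Fin 2) ℂ := fun a b => if a = 0 ∧ b = 1 then 1 else 0

/-- σ⁻ = [[0,0],[1,0]] -/
def sigmaM : Matrix (Fin 2) (Fin 2) ℂ := fun a b => if a = 1 ∧ b = 0 then 1 else 0

/-- diagonal entry of K = diag(v, v⁻¹) -/
def Kdiag (v : ℂ) (a : Fin 2) : ℂ := if a = 0 then v else v⁻¹

/-- `S_i^A = K^{⊗(i−1)} ⊗ A ⊗ (K⁻¹)^{⊗(n−i)}` as a matrix on `(ℂ²)^{⊗n}`. -/
def siteOp (n : ℕ) (v : ℂ) (A : Matrix (Fin 2) (Fin 2) ℂ) (i : Fin n) :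
    Matrix (Spins n) (Spins n) ℂ :=
  fun x y => ∏ k : Fin n,
    if k < i then (if x k = y k then Kdiag v (x k) else 0)
    else if k = i then A (x k) (y k)
    else (if x k = y k then Kdiag v⁻¹ (x k) else 0)

/-- `S^+ = Σ_i S_i^+`. -/
def SpOp (n : ℕ) (v : ℂ) : Matrix (Spins n) (Spins n) ℂ := ∑ i : Fin n, siteOp n v sigmaP i

/-- `S^- = Σ_i S_i^-`. -/
def SmOp (n : ℕ) (v : ℂ) : Matrix (Spins n) (Spins n) ℂ := ∑ i : Fin n, siteOp n v sigmaM i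

/-- `Σ^z = Σ_i 1 ⊗ ⋯ ⊗ σ^z ⊗ ⋯ ⊗ 1` (diagonal). -/
def SzOp (n : ℕ) : Matrix (Spins n) (Spins n) ℂ :=
  fun x y => if x = y then ∑ k : Fin n, (if x k = 0 then (1 : ℂ) else -1) else 0

/-- symmetric q-number `[k] = (q^k − q^{−k})/(q − q⁻¹)`. -/
def qNum (q : ℂ) (k : ℤ) : ℂ := (q ^ k - q ^ (-k)) / (q - q⁻¹)

/-- q-factorial `[k]! = [k][k−1]⋯[1]`, `[0]! = 1`. -/
def qFact (q : ℂ) : ℕ → ℂ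
  | 0 => 1
  | k + 1 => qNum q (k + 1) * qFact q k

/-- q-binomial `[k choose l]`, zero unless `0 ≤ l ≤ k`. -/
def qBinom (q : ℂ) (k l : ℤ) : ℂ :=
  if 0 ≤ l ∧ l ≤ k then qFact q k.toNat / (qFact q l.toNat * qFact q (k - l).toNat) else 0

/-- `q` is generic: nonzero and not a root of unity. -/
def Generic (q : ℂ) : Prop := q ≠ 0 ∧ ∀ k : ℕ, 0 < k → q ^ k ≠ 1

def GenericSet : Set ℂ := {q | Generic q}

/-- the root of unity `q` is associated with `p`: `p ≥ 2` is minimal with `q^{2p} = 1`. -/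
def AssocRootOfUnity (q : ℂ) (p : ℕ) : Prop :=
  2 ≤ p ∧ q ^ (2 * p) = 1 ∧ ∀ k : ℕ, 0 < k → k < p → q ^ (2 * k) ≠ 1

/-- the coefficient `a_{i,j,m}` of the paper, with `k = j − m` and `s = j + m`:
`a = (−1)^{i+k} [i choose k] [i+s+1 choose i+1]⁻¹ [k+s+1] / [i+1]`. -/
def aCoeff (q : ℂ) (i k s : ℤ) : ℂ :=
  (-1 : ℂ) ^ (i + k) * qBinom q i k * (qBinom q (i + s + 1) (i + 1))⁻¹ *
    qNum q (k + s + 1) / qNum q (i + 1)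

/-- `S_r = (S^−)^r (S^+)^r / ([r]!)²` with `q = v²`. -/
def SOp (n : ℕ) (v : ℂ) (r : ℕ) : Matrix (Spins n) (Spins n) ℂ :=
  ((qFact (v ^ 2) r) ^ 2)⁻¹ • (SmOp n v ^ r * SpOp n v ^ r)

/-- a function of `q` is regular at `q_c` if it has a finite limit as `q → q_c`
through generic values of `q`. -/
def RegularAt (f : ℂ → ℂ) (qc : ℂ) : Prop :=
  ∃ L : ℂ, Tendsto f (𝓝[GenericSet] qc) (𝓝 L)

/-!
Up to sign, the `r`-th summand is `F (r - 1) + F r`, where `F l` is the right-hand side without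
its sign and `F (-1) = 0`, so the alternating sum telescopes. After clearing q-factorials the
recurrence `F n + F (n + 1) = summand (n + 1)` is the three-term identity
`[a][b] = [a - c][b - c] + [c][a + b - c]` with `a = M + 2n + 3`, `b = i`, `c = n + 1`.
-/

lemma qNum_mul_qNum (q : ℂ) (a b c : ℤ) :
    qNum q a * qNum q b = qNum q (a - c) * qNum q (b - c) + qNum q c * qNum q (a + b - c) := by
  rcases eq_or_ne q 0 with rfl | hq
  · simp [qNum]
  simp only [qNum, div_mul_div_comm, ← add_div]
  congr 1
  simp only [_root_.zpow_neg, zpow_sub₀ hq, zpow_add₀ hq]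
  field_simp
  ring

lemma Generic.zpow_ne_one {q : ℂ} (hq : Generic q) {k : ℤ} (hk : k ≠ 0) : q ^ k ≠ 1 := by
  rcases Int.natAbs_eq k with h | h <;> rw [h]
  · exact_mod_cast hq.2 _ (Int.natAbs_pos.2 hk)
  · rw [_root_.zpow_neg, inv_ne_one, zpow_natCast]
    exact hq.2 _ (Int.natAbs_pos.2 hk)

lemma Generic.zpow_sub_zpow_neg_ne_zero {q : ℂ} (hq : Generic q) {k : ℤ} (hk : k ≠ 0) :
    q ^ k - q ^ (-k) ≠ 0 := by
  intro h
  apply hq.zpow_ne_one (mul_ne_zero two_ne_zero hk)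
  rw [two_mul, zpow_add₀ hq.1]
  nth_rw 2 [sub_eq_zero.1 h]
  rw [← zpow_add₀ hq.1, add_neg_cancel, zpow_zero]

lemma Generic.qNum_ne_zero {q : ℂ} (hq : Generic q) {k : ℤ} (hk : k ≠ 0) : qNum q k ≠ 0 := by
  have h1 := hq.zpow_sub_zpow_neg_ne_zero one_ne_zero
  rw [zpow_one, _root_.zpow_neg_one] at h1
  exact div_ne_zero (hq.zpow_sub_zpow_neg_ne_zero hk) h1

lemma Generic.qFact_ne_zero {q : ℂ} (hq : Generic q) (k : ℕ) : qFact q k ≠ 0 := by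
  induction k with
  | zero => exact one_ne_zero
  | succ k ih => exact mul_ne_zero (hq.qNum_ne_zero (by omega)) ih

@[simp]
lemma qFact_zero (q : ℂ) : qFact q 0 = 1 := rfl

lemma qFact_succ (q : ℂ) (k : ℕ) : qFact q (k + 1) = qNum q (k + 1 : ℕ) * qFact q k := by
  simp [qFact]

def qSummand (q : ℂ) (M i r : ℕ) : ℂ :=
  qFact q (M + r) * qNum q ((M : ℤ) + 2 * r + 1) /
    (qFact q r * qFact q (i - r) * qFact q (M + r + i + 1))

def qSummandPrimitive (q : ℂ) (M i l : ℕ) : ℂ :=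
  qFact q (M + l + 1) / (qFact q (M + i + l + 1) * qFact q (i - l - 1) * qFact q l * qNum q (i : ℤ))

lemma qSummand_zero {q : ℂ} (hq : Generic q) (M : ℕ) {i : ℕ} (hi : 0 < i) :
    qSummand q M i 0 = qSummandPrimitive q M i 0 := by
  obtain ⟨j, rfl⟩ : ∃ j, i = j + 1 := ⟨i - 1, by omega⟩
  simp only [qSummand, qSummandPrimitive, add_zero, Nat.sub_zero, Nat.add_sub_cancel,
    show M + (j + 1) + 1 = M + j + 1 + 1 by ring, CharP.cast_eq_zero, mul_zero, qFact_zero,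
    qFact_succ q M, qFact_succ q j]
  have := hq.qFact_ne_zero
  have : qNum q (j + 1 : ℕ) ≠ 0 := hq.qNum_ne_zero (by omega)
  field_simp
  push_cast
  ring

lemma qSummand_succ {q : ℂ} (hq : Generic q) (M : ℕ) {i n : ℕ} (hn : n + 1 < i) :
    qSummand q M i (n + 1) = qSummandPrimitive q M i n + qSummandPrimitive q M i (n + 1) := by
  obtain ⟨j, rfl⟩ : ∃ j, i = n + j + 2 := ⟨i - n - 2, by omega⟩
  have key : qNum q (M + 2 * (n + 1 : ℕ) + 1) * qNum q (n + j + 2 : ℕ) =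
      qNum q (M + n + 1 + 1 : ℕ) * qNum q (j + 1 : ℕ) +
        qNum q (n + 1 : ℕ) * qNum q (M + 2 * n + j + 3 + 1 : ℕ) := by
    convert qNum_mul_qNum q (M + 2 * (n + 1 : ℕ) + 1) (n + j + 2 : ℕ) (n + 1 : ℕ) using 4 <;>
      push_cast <;> ring
  simp only [qSummand, qSummandPrimitive,
    show M + (n + 1) = M + n + 1 by ring, Nat.add_sub_cancel,
    show n + j + 2 - (n + 1) = j + 1 by omega,
    show M + n + 1 + (n + j + 2) + 1 = M + 2 * n + j + 3 + 1 by ring,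
    show M + (n + j + 2) + n + 1 = M + 2 * n + j + 3 by ring,
    show n + j + 2 - n - 1 = j + 1 by omega,
    show M + (n + j + 2) + (n + 1) + 1 = M + 2 * n + j + 3 + 1 by ring,
    qFact_succ q (M + n + 1), qFact_succ q (M + 2 * n + j + 3), qFact_succ q j, qFact_succ q n]
  have := hq.qFact_ne_zero
  have : qNum q (n + 1 : ℕ) ≠ 0 := hq.qNum_ne_zero (by omega)
  have : qNum q (j + 1 : ℕ) ≠ 0 := hq.qNum_ne_zero (by omega)
  have : qNum q (M + 2 * n + j + 3 + 1 : ℕ) ≠ 0 := hq.qNum_ne_zero (by omega)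
  have : qNum q (n + j + 2 : ℕ) ≠ 0 := hq.qNum_ne_zero (by omega)
  field_simp
  rw [mul_assoc, key]
  ring

theorem stmt11_general (q : ℂ) (hq : Generic q) (M i l : ℕ) (hl : l < i) :
    ∑ r ∈ Finset.range (l + 1),
      (-1 : ℂ) ^ r * (qFact q (M + r) * qNum q ((M : ℤ) + 2 * r + 1) /
        (qFact q r * qFact q (i - r) * qFact q (M + r + i + 1))) =
    (-1 : ℂ) ^ l * (qFact q (M + l + 1) /
      (qFact q (M + i + l + 1) * qFact q (i - l - 1) * qFact q l * qNum q (i : ℤ))) := by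
  change ∑ r ∈ range (l + 1), (-1 : ℂ) ^ r * qSummand q M i r =
    (-1 : ℂ) ^ l * qSummandPrimitive q M i l
  induction l with
  | zero => simp [qSummand_zero hq M (by omega : 0 < i)]
  | succ n ih =>
    rw [sum_range_succ, ih (by omega), qSummand_succ hq M hl]
    ring

/-- for generic `q` and `0 ≤ l < i` (here `M = 2m`),
`Σ_{r=0}^{l} (−1)^r [M+r]![M+2r+1]/([r]![i−r]![M+r+i+1]!)
  = (−1)^l [M+l+1]!/([M+i+l+1]![i−l−1]![l]![i])`. -/
theorem stmt11 (q : ℂ) (hq : Generic q) (M i l : ℕ) (hi : 1 ≤ i) (hl : l < i) :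
    ∑ r ∈ Finset.range (l + 1),
      (-1 : ℂ) ^ r * (qFact q (M + r) * qNum q ((M : ℤ) + 2 * r + 1) /
        (qFact q r * qFact q (i - r) * qFact q (M + r + i + 1))) =
    (-1 : ℂ) ^ l * (qFact q (M + l + 1) /
      (qFact q (M + i + l + 1) * qFact q (i - l - 1) * qFact q l * qNum q (i : ℤ))) :=
  stmt11_general q hq M i l hl
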